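/- Let b be a planar binary tree with β ≥ 2 leaves. Then there is a unique planar binary tree A with K leaves and a unique tuple Ê ∈ {ε,Y}^K with n_Y(Ê) = L = β − K such that Ê∝A = b, where L is the maximal number of Y's that can appear in any growing representation of b; moreover A is obtained from b by deleting all pairs of leaves that are the two children of a common internal vertex. -/

import Mathlib

/-- Planar binary trees: a leaf `ε`, or a grafting `B₊(b₁,b₂)` of two trees under a new root. -/
inductive PBT : Type
  | leaf : PBT
  | node : PBT → PBT → PBT
  deriving DecidableEq

namespace PBT

/-- The number of internal vertices `|b|`. -/
def internal : PBT → ℕ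
  | leaf => 0
  | node b₁ b₂ => internal b₁ + internal b₂ + 1

/-- The number of leaves `‖b‖`. -/
def leaves : PBT → ℕ
  | leaf => 1
  | node b₁ b₂ => leaves b₁ + leaves b₂

/-- The tree `Y` with one internal vertex and two leaves. -/
def Y : PBT := node leaf leaf

/-- Helper for grafting: replaces the leaves of the first argument, in left-to-right
order, by the entries of the list, returning the grown tree and the unused entries. -/
def graftAux : PBT → List PBT → PBT × List PBT
  | leaf, [] => (leaf, [])
  | leaf, e :: rest => (e, rest)
  | node a b, l =>
      let p := graftAux a l
      let q := graftAux b p.2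
      (node p.1 q.1, q.2)

/-- The growing `E ∝ a`: replace the i-th leaf of `a` by the i-th entry of `E`. -/
def graft (a : PBT) (E : List PBT) : PBT := (graftAux a E).1

/-- `Rep b a E` : the pair `(a, E)` is a growing representation of `b`,
i.e. `E ∈ {ε,Y}^‖a‖` and `E ∝ a = b`. -/
def Rep (b a : PBT) (E : List PBT) : Prop :=
  (∀ e ∈ E, e = leaf ∨ e = Y) ∧ E.length = a.leaves ∧ graft a E = b

end PBT

namespace PBT

/-- Contracting a tree: delete every pair of leaves that are the two children of a
common internal vertex (replace each such cherry by a leaf). -/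
def contract : PBT → PBT
  | leaf => leaf
  | node leaf leaf => leaf
  | node a b => node (contract a) (contract b)

end PBT

/-! Write `cherryPattern b` for the word obtained by reading the leaves of `contract b` from
left to right and recording `Y` for a leaf that replaced a cherry of `b` and `ε` otherwise, so
that `cherryPattern b ∝ contract b = b`. Conversely, in any growing representation `E ∝ a = b`
every `Y` of `E` grows into a cherry of `b`, and an induction over `a` shows that `E` has at
most as many `Y`'s as there are cherries, with equality only for `(contract b, cherryPattern b)`.
Since each `Y` adds one leaf, `a` has `‖b‖ - n_Y(E)` leaves. -/

namespace PBT

def cherryPattern : PBT → List PBT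
  | leaf => [leaf]
  | node leaf leaf => [Y]
  | node a b => cherryPattern a ++ cherryPattern b

theorem contract_node_of_ne_Y {b₁ b₂ : PBT} (h : node b₁ b₂ ≠ Y) :
    contract (node b₁ b₂) = node (contract b₁) (contract b₂) := by
  match b₁, b₂ with
  | leaf, leaf => exact absurd rfl h
  | leaf, node _ _ => rfl
  | node _ _, _ => rfl

theorem cherryPattern_node_of_ne_Y {b₁ b₂ : PBT} (h : node b₁ b₂ ≠ Y) :
    cherryPattern (node b₁ b₂) = cherryPattern b₁ ++ cherryPattern b₂ := by
  match b₁, b₂ with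
  | leaf, leaf => exact absurd rfl h
  | leaf, node _ _ => rfl
  | node _ _, _ => rfl

theorem graftAux_append (a : PBT) {E₁ : List PBT} (E₂ : List PBT) (h : E₁.length = a.leaves) :
    graftAux a (E₁ ++ E₂) = (graft a E₁, E₂) := by
  induction a generalizing E₁ E₂ with
  | leaf =>
    obtain ⟨e, rfl⟩ := List.length_eq_one_iff.1 h
    rfl
  | node a₁ a₂ ih₁ ih₂ =>
    have h₁ : (E₁.take a₁.leaves).length = a₁.leaves := by simp [leaves] at h ⊢; omega
    have h₂ : (E₁.drop a₁.leaves).length = a₂.leaves := by simp [leaves] at h ⊢; omega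
    rw [← List.take_append_drop a₁.leaves E₁, List.append_assoc]
    simp only [graft, graftAux, ih₁ _ h₁, ih₂ _ h₂]

theorem graft_node {a₁ : PBT} (a₂ : PBT) {E₁ : List PBT} (E₂ : List PBT)
    (h : E₁.length = a₁.leaves) :
    graft (node a₁ a₂) (E₁ ++ E₂) = node (graft a₁ E₁) (graft a₂ E₂) := by
  simp only [graft, graftAux, graftAux_append _ _ h]

theorem rep_leaf_iff {b : PBT} {E : List PBT} :
    Rep b leaf E ↔ (b = leaf ∧ E = [leaf]) ∨ (b = Y ∧ E = [Y]) := by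
  constructor
  · rintro ⟨hE, hlen, hb⟩
    obtain ⟨e, rfl⟩ := List.length_eq_one_iff.1 hlen
    obtain rfl : e = b := hb
    simpa using hE
  · rintro (⟨rfl, rfl⟩ | ⟨rfl, rfl⟩) <;> exact ⟨by simp, rfl, rfl⟩

theorem rep_node_iff {b a₁ a₂ : PBT} {E : List PBT} :
    Rep b (node a₁ a₂) E ↔ ∃ b₁ b₂ E₁ E₂,
      b = node b₁ b₂ ∧ E = E₁ ++ E₂ ∧ Rep b₁ a₁ E₁ ∧ Rep b₂ a₂ E₂ := by
  constructor
  · rintro ⟨hE, hlen, hb⟩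
    have h₁ : (E.take a₁.leaves).length = a₁.leaves := by simp [leaves] at hlen ⊢; omega
    have h₂ : (E.drop a₁.leaves).length = a₂.leaves := by simp [leaves] at hlen ⊢; omega
    rw [← List.take_append_drop a₁.leaves E] at hE hb
    rw [graft_node _ _ h₁] at hb
    exact ⟨_, _, _, _, hb.symm, (List.take_append_drop _ _).symm,
      ⟨fun e he => hE e (List.mem_append_left _ he), h₁, rfl⟩,
      ⟨fun e he => hE e (List.mem_append_right _ he), h₂, rfl⟩⟩
  · rintro ⟨b₁, b₂, E₁, E₂, rfl, rfl, ⟨hE₁, hlen₁, rfl⟩, ⟨hE₂, hlen₂, rfl⟩⟩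
    refine ⟨fun e he => ?_, by simp [leaves, hlen₁, hlen₂], graft_node _ _ hlen₁⟩
    rcases List.mem_append.1 he with he | he
    exacts [hE₁ e he, hE₂ e he]

theorem rep_leaf_left {a : PBT} {E : List PBT} (h : Rep leaf a E) : a = leaf ∧ E = [leaf] := by
  cases a with
  | leaf => simpa [Y] using rep_leaf_iff.1 h
  | node a₁ a₂ =>
    obtain ⟨_, _, _, _, h, -⟩ := rep_node_iff.1 h
    cases h

theorem leaves_eq_of_rep {b a : PBT} {E : List PBT} (h : Rep b a E) :
    b.leaves = a.leaves + E.count Y := by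
  induction a generalizing b E with
  | leaf =>
    rcases rep_leaf_iff.1 h with ⟨rfl, rfl⟩ | ⟨rfl, rfl⟩ <;> simp [leaves, Y]
  | node a₁ a₂ ih₁ ih₂ =>
    obtain ⟨b₁, b₂, E₁, E₂, rfl, rfl, h₁, h₂⟩ := rep_node_iff.1 h
    simp only [leaves, List.count_append, ih₁ h₁, ih₂ h₂]
    omega

theorem rep_contract_cherryPattern (b : PBT) : Rep b (contract b) (cherryPattern b) := by
  induction b with
  | leaf => exact rep_leaf_iff.2 (Or.inl ⟨rfl, rfl⟩)
  | node b₁ b₂ ih₁ ih₂ =>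
    by_cases hY : node b₁ b₂ = Y
    · rw [hY]
      exact rep_leaf_iff.2 (Or.inr ⟨rfl, rfl⟩)
    · rw [contract_node_of_ne_Y hY, cherryPattern_node_of_ne_Y hY]
      exact rep_node_iff.2 ⟨_, _, _, _, rfl, rfl, ih₁, ih₂⟩

theorem count_Y_of_rep_Y_node {a₁ a₂ : PBT} {E : List PBT} (h : Rep Y (node a₁ a₂) E) :
    E.count Y = 0 := by
  obtain ⟨_, _, E₁, E₂, hb, rfl, h₁, h₂⟩ := rep_node_iff.1 h
  cases hb
  rw [(rep_leaf_left h₁).2, (rep_leaf_left h₂).2]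
  simp [Y]

theorem count_Y_le_of_rep {b a : PBT} {E : List PBT} (h : Rep b a E) :
    E.count Y ≤ (cherryPattern b).count Y := by
  induction a generalizing b E with
  | leaf => rcases rep_leaf_iff.1 h with ⟨rfl, rfl⟩ | ⟨rfl, rfl⟩ <;> rfl
  | node a₁ a₂ ih₁ ih₂ =>
    by_cases hY : b = Y
    · subst hY
      simp [count_Y_of_rep_Y_node h]
    obtain ⟨b₁, b₂, E₁, E₂, rfl, rfl, h₁, h₂⟩ := rep_node_iff.1 h
    rw [cherryPattern_node_of_ne_Y hY, List.count_append, List.count_append]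
    exact Nat.add_le_add (ih₁ h₁) (ih₂ h₂)

theorem eq_contract_of_rep_of_count_Y_eq {b a : PBT} {E : List PBT} (h : Rep b a E)
    (hcount : E.count Y = (cherryPattern b).count Y) :
    a = contract b ∧ E = cherryPattern b := by
  induction a generalizing b E with
  | leaf => rcases rep_leaf_iff.1 h with ⟨rfl, rfl⟩ | ⟨rfl, rfl⟩ <;> exact ⟨rfl, rfl⟩
  | node a₁ a₂ ih₁ ih₂ =>
    by_cases hY : b = Y
    · subst hY
      exact absurd (count_Y_of_rep_Y_node h ▸ hcount) (by decide)
    obtain ⟨b₁, b₂, E₁, E₂, rfl, rfl, h₁, h₂⟩ := rep_node_iff.1 h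
    rw [cherryPattern_node_of_ne_Y hY, List.count_append, List.count_append] at hcount
    have le₁ := count_Y_le_of_rep h₁
    have le₂ := count_Y_le_of_rep h₂
    obtain ⟨rfl, rfl⟩ := ih₁ h₁ (by omega)
    obtain ⟨rfl, rfl⟩ := ih₂ h₂ (by omega)
    exact ⟨(contract_node_of_ne_Y hY).symm, (cherryPattern_node_of_ne_Y hY).symm⟩

theorem isGreatest_count_Y_rep (b : PBT) :
    IsGreatest {i : ℕ | ∃ a E, Rep b a E ∧ E.count Y = i} ((cherryPattern b).count Y) :=
  ⟨⟨_, _, rep_contract_cherryPattern b, rfl⟩, by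
    rintro _ ⟨a, E, h, rfl⟩
    exact count_Y_le_of_rep h⟩

end PBT

theorem exists_unique_maximal_contraction_general (b : PBT) (L : ℕ)
    (hL : IsGreatest {i : ℕ | ∃ a E, PBT.Rep b a E ∧ E.count PBT.Y = i} L) :
    (∃! p : PBT × List PBT, PBT.Rep b p.1 p.2 ∧ p.2.count PBT.Y = L) ∧
    ∀ a E, PBT.Rep b a E → E.count PBT.Y = L →
      a = PBT.contract b ∧ a.leaves = b.leaves - L := by
  obtain rfl := hL.unique (PBT.isGreatest_count_Y_rep b)
  refine ⟨⟨(PBT.contract b, PBT.cherryPattern b), ⟨PBT.rep_contract_cherryPattern b, rfl⟩, ?_⟩,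
    fun a E h hcount => ⟨(PBT.eq_contract_of_rep_of_count_Y_eq h hcount).1, ?_⟩⟩
  · rintro ⟨a, E⟩ ⟨h, hcount⟩
    obtain ⟨rfl, rfl⟩ := PBT.eq_contract_of_rep_of_count_Y_eq h hcount
    rfl
  · rw [PBT.leaves_eq_of_rep h, hcount]
    omega

/-- For a planar binary tree `b` with `β ≥ 2` leaves, letting `L` be the maximal number
of `Y`'s appearing in any growing representation of `b`, there is a unique pair
`(A, Ê)` with `Ê ∈ {ε,Y}^K`, `n_Y(Ê) = L` and `Ê ∝ A = b`; moreover `A` is the tree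
obtained from `b` by deleting all cherries, and `A` has `K = β − L` leaves. -/
theorem exists_unique_maximal_contraction (b : PBT) (hb : 2 ≤ b.leaves) (L : ℕ)
    (hL : IsGreatest {i : ℕ | ∃ a E, PBT.Rep b a E ∧ E.count PBT.Y = i} L) :
    (∃! p : PBT × List PBT, PBT.Rep b p.1 p.2 ∧ p.2.count PBT.Y = L) ∧
    ∀ a E, PBT.Rep b a E → E.count PBT.Y = L →
      a = PBT.contract b ∧ a.leaves = b.leaves - L :=
  exists_unique_maximal_contraction_general b L hL
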